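/- Let u:ℝᴺ×[0,∞)→[0,∞) be bounded by M, with sup_{t>0} u(x,t) → 0 as |x| → ∞, and suppose (1/2)∫|∇u(·,t)|² - ∫F(u(·,t)) ≤ C₀ for all t ≥ t₀, where F(s) ≤ (f'(0)/4)s² for 0 ≤ s ≤ δ with f'(0) < 0, and u(x,t) ≤ δ for |x| ≥ R₀ and all t. Then sup_{t≥t₀} ‖u(·,t)‖_{H¹(ℝᴺ)} < ∞, with bound (1/2)∫|∇u|² + (|f'(0)|/4)∫u² ≤ C₀ + |B_{R₀}|(sup_{s∈[0,M]}F(s) + M²|f'(0)|/4). -/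

import Mathlib

/-! The integrand `F(u) + (|c|/4) u²` is at most `sup_{[0,M]} F + M²|c|/4` on the ball `B_{R₀}`
and nonpositive outside it, where `u ≤ δ` and `F(u) ≤ (c/4) u²`. Integrating, `∫ F(u) + (|c|/4) ∫ u²`
is at most `|B_{R₀}|` times that constant, and adding the energy bound gives the claim. -/

open MeasureTheory

theorem integral_le_measureReal_mul_of_le_of_nonpos {α : Type*} [MeasurableSpace α]
    {μ : Measure α} {s : Set α} {g : α → ℝ} {K : ℝ} (hs : MeasurableSet s) (hμs : μ s ≠ ⊤)
    (hg : Integrable g μ) (h_in : ∀ x ∈ s, g x ≤ K) (h_out : ∀ x ∉ s, g x ≤ 0) :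
    ∫ x, g x ∂μ ≤ μ.real s * K := by
  have hgK : ∀ x, g x ≤ s.indicator (fun _ => K) x := fun x => by
    by_cases hx : x ∈ s
    · simpa [hx] using h_in x hx
    · simpa [hx] using h_out x hx
  calc ∫ x, g x ∂μ ≤ ∫ x, s.indicator (fun _ => K) x ∂μ :=
        integral_mono hg ((integrable_indicator_iff hs).2 (integrableOn_const hμs)) hgK
    _ = μ.real s * K := by rw [integral_indicator_const K hs, smul_eq_mul]

theorem add_abs_div_four_mul_sq_le_sSup_add {F : ℝ → ℝ} {M c s : ℝ}
    (hF : BddAbove (F '' Set.Icc 0 M)) (hs : s ∈ Set.Icc 0 M) :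
    F s + |c| / 4 * s ^ 2 ≤ sSup (F '' Set.Icc 0 M) + M ^ 2 * |c| / 4 := by
  have hFs : F s ≤ sSup (F '' Set.Icc 0 M) := le_csSup hF ⟨s, hs, rfl⟩
  have hs2 : s ^ 2 ≤ M ^ 2 := pow_le_pow_left₀ hs.1 hs.2 2
  nlinarith [abs_nonneg c]

theorem stmt_16_general {N : ℕ} (u : EuclideanSpace ℝ (Fin N) → ℝ → ℝ) (F : ℝ → ℝ)
    (M δ R₀ C₀ c t₀ : ℝ) (hc : c < 0)
    (hbound : ∀ x t, 0 ≤ u x t ∧ u x t ≤ M)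
    (henergy : ∀ t, t₀ ≤ t →
      (1/2) * (∫ x, ‖fderiv ℝ (fun y => u y t) x‖ ^ 2) - (∫ x, F (u x t)) ≤ C₀)
    (hF : ∀ s : ℝ, 0 ≤ s → s ≤ δ → F s ≤ (c/4) * s ^ 2)
    (hfar : ∀ t x, R₀ ≤ ‖x‖ → u x t ≤ δ)
    (hFcont : ContinuousOn F (Set.Icc 0 M))
    (hint1 : ∀ t, t₀ ≤ t → Integrable (fun x => (u x t) ^ 2))
    (hint3 : ∀ t, t₀ ≤ t → Integrable (fun x => F (u x t))) :
    ∀ t, t₀ ≤ t →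
      (1/2) * (∫ x, ‖fderiv ℝ (fun y => u y t) x‖ ^ 2) +
          (|c|/4) * (∫ x, (u x t) ^ 2) ≤
        C₀ + (volume (Metric.ball (0 : EuclideanSpace ℝ (Fin N)) R₀)).toReal *
          (sSup (F '' Set.Icc 0 M) + M ^ 2 * |c| / 4) := by
  intro t ht
  have hbdd : BddAbove (F '' Set.Icc 0 M) :=
    (isCompact_Icc.image_of_continuousOn hFcont).bddAbove
  have hfar_nonpos : ∀ x ∉ Metric.ball 0 R₀, F (u x t) + |c| / 4 * u x t ^ 2 ≤ 0 := by
    intro x hx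
    have hFu := hF _ (hbound x t).1 (hfar t x (by simpa using hx))
    rw [abs_of_neg hc]
    linarith
  have hint : Integrable (fun x => F (u x t) + |c| / 4 * u x t ^ 2) :=
    (hint3 t ht).add ((hint1 t ht).const_mul _)
  have hsplit : ∫ x, (F (u x t) + |c| / 4 * u x t ^ 2) =
      (∫ x, F (u x t)) + |c| / 4 * ∫ x, u x t ^ 2 := by
    rw [integral_add (hint3 t ht) ((hint1 t ht).const_mul _), integral_const_mul]
  have hlocal := integral_le_measureReal_mul_of_le_of_nonpos Metric.isOpen_ball.measurableSet
    measure_ball_lt_top.ne hint (fun x _ => add_abs_div_four_mul_sq_le_sSup_add hbdd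
      (hbound x t)) hfar_nonpos
  rw [hsplit, measureReal_def] at hlocal
  linarith [henergy t ht]

/-- Uniform H¹ bound from the energy bound: if 0 ≤ u ≤ M, the energy
(1/2)∫|∇u|² - ∫F(u) is bounded by C₀ for t ≥ t₀, F(s) ≤ (c/4)s² for
0 ≤ s ≤ δ (with c = f'(0) < 0), and u(x,t) ≤ δ for |x| ≥ R₀, then
(1/2)∫|∇u|² + (|c|/4)∫u² ≤ C₀ + |B_{R₀}|(sup_{[0,M]}F + M²|c|/4). -/
theorem stmt_16 {N : ℕ} (u : EuclideanSpace ℝ (Fin N) → ℝ → ℝ) (F : ℝ → ℝ)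
    (M δ R₀ C₀ c t₀ : ℝ) (hc : c < 0) (hM : 0 ≤ M) (hδ : 0 < δ) (hR : 0 < R₀)
    (hbound : ∀ x t, 0 ≤ u x t ∧ u x t ≤ M)
    (hdiff : ∀ t, Differentiable ℝ (fun x => u x t))
    (henergy : ∀ t, t₀ ≤ t →
      (1/2) * (∫ x, ‖fderiv ℝ (fun y => u y t) x‖ ^ 2) - (∫ x, F (u x t)) ≤ C₀)
    (hF : ∀ s : ℝ, 0 ≤ s → s ≤ δ → F s ≤ (c/4) * s ^ 2)
    (hfar : ∀ t x, R₀ ≤ ‖x‖ → u x t ≤ δ)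
    (hFcont : ContinuousOn F (Set.Icc 0 M))
    (hint1 : ∀ t, t₀ ≤ t → Integrable (fun x => (u x t) ^ 2))
    (hint2 : ∀ t, t₀ ≤ t →
      Integrable (fun x => ‖fderiv ℝ (fun y => u y t) x‖ ^ 2))
    (hint3 : ∀ t, t₀ ≤ t → Integrable (fun x => F (u x t))) :
    ∀ t, t₀ ≤ t →
      (1/2) * (∫ x, ‖fderiv ℝ (fun y => u y t) x‖ ^ 2) +
          (|c|/4) * (∫ x, (u x t) ^ 2) ≤
        C₀ + (volume (Metric.ball (0 : EuclideanSpace ℝ (Fin N)) R₀)).toReal *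
          (sSup (F '' Set.Icc 0 M) + M ^ 2 * |c| / 4) :=
  stmt_16_general u F M δ R₀ C₀ c t₀ hc hbound henergy hF hfar hFcont hint1 hint3
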